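/- Let n ≥ 3 be an odd integer, let q = e^{2πi/n}, let p = e^{(n+1)πi/n} (so p² = q), and let i, j be nonnegative integers at most n−1 such that i² − j² is coprime to n. Let A = ℂ⟨u,v⟩/(p^{i²−j²}·u·v − v·u). Let φ_x, φ_y : A → A be the ℂ-algebra endomorphisms determined by φ_x(u) = q^i·u, φ_x(v) = q^j·v and φ_y(u) = q^j·u, φ_y(v) = q^i·v (these are well defined since they rescale the defining relation). Let ζ : A → A be any ℂ-linear map satisfying ζ(u^a·v^b) = q^{(a + C(a,2) + C(b,2))·i·j + a·b·j²} · p^{a·b·(i²−j²)} · u^b·v^a for all nonnegative integers a, b. Then the set { f ∈ A : φ_x(f) = f, φ_y(f) = f, ζ(f) = f } equals the ℂ-subalgebra of A generated by u^n + v^n and u^n·v^n. -/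

import Mathlib

/-! The monomials `u ^ a * v ^ b` form a basis of `A` (they act independently on `ℂ[ℕ × ℕ]` by
shifts). `φx` and `φy` are diagonal in this basis with eigenvalues `q ^ (a i + b j)` and
`q ^ (a j + b i)`; as `i ^ 2 - j ^ 2` and `2` are units mod `n`, both are `1` exactly when
`n ∣ a` and `n ∣ b`. Hence the common fixed space of `φx` and `φy` is the image of
`ℂ[X, Y] → A`, `X ↦ uⁿ`, `Y ↦ vⁿ` (these commute because `P ^ (n * n) = 1`), and since `n` is
odd the scalar in `ζ` is `1` there, so `ζ` acts as the swap `X ↔ Y`. The `ζ`-fixed part is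
therefore the image of the symmetric polynomials, which are generated by `X + Y` and `X * Y`. -/

noncomputable section

open FreeAlgebra

/-- The relation `v u = P • (u v)` on `ℂ⟨u,v⟩`, i.e. the quotient by the two-sided
ideal generated by `P·uv - vu`. -/
inductive Stmt11.Rel (P : ℂ) : FreeAlgebra ℂ (Fin 2) → FreeAlgebra ℂ (Fin 2) → Prop
  | main : Stmt11.Rel P (ι ℂ 1 * ι ℂ 0) (P • (ι ℂ 0 * ι ℂ 1))

/-- `A⁻ = ℂ⟨u,v⟩/(P·uv - vu)`. -/
abbrev Stmt11.A (P : ℂ) := RingQuot (Stmt11.Rel P)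

def Stmt11.u (P : ℂ) : Stmt11.A P := RingQuot.mkAlgHom ℂ (Stmt11.Rel P) (ι ℂ 0)
def Stmt11.v (P : ℂ) : Stmt11.A P := RingQuot.mkAlgHom ℂ (Stmt11.Rel P) (ι ℂ 1)

theorem Module.Basis.apply_eq_self_iff_of_apply_eq_smul {ι R M : Type*} [CommRing R] [IsDomain R]
    [AddCommGroup M] [Module R M] (b : Module.Basis ι R M) {T : M →ₗ[R] M} {χ : ι → R}
    (hT : ∀ x, T (b x) = χ x • b x) (f : M) :
    T f = f ↔ ∀ x ∈ (b.repr f).support, χ x = 1 := by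
  have hrepr (x : ι) : b.repr (T f) x = χ x * b.repr f x := by
    have : (Finsupp.lapply x).comp (b.repr.toLinearMap.comp T) =
        χ x • (Finsupp.lapply x).comp b.repr.toLinearMap :=
      b.ext fun y => by rcases eq_or_ne y x with rfl | h <;> simp [*]
    exact LinearMap.congr_fun this f
  simp only [b.ext_elem_iff, hrepr, Finsupp.mem_support_iff]
  exact forall_congr' fun x => by rw [mul_left_eq_self₀]; tauto

open MvPolynomial in
theorem MvPolynomial.symmetricSubalgebra_eq_adjoin_esymm {R : Type*} [CommRing R] (n : ℕ) :
    symmetricSubalgebra (Fin n) R =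
      Algebra.adjoin R (Set.range fun i : Fin n => esymm (Fin n) R (i + 1)) := by
  refine le_antisymm (fun p hp => ?_) (Algebra.adjoin_le ?_)
  · obtain ⟨r, hr⟩ := esymmAlgHom_fin_surjective R le_rfl ⟨p, hp⟩
    rw [Algebra.adjoin_range_eq_range_aeval]
    exact ⟨r, (esymmAlgHom_apply r).symm.trans (congrArg Subtype.val hr)⟩
  · rintro _ ⟨i, rfl⟩
    exact esymm_isSymmetric _ _ _

open MvPolynomial in
theorem MvPolynomial.isSymmetric_add_rename_swap {R : Type*} [CommSemiring R]
    (g : MvPolynomial (Fin 2) R) : (g + rename (Equiv.swap 0 1) g).IsSymmetric := by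
  have hperm : ∀ e : Equiv.Perm (Fin 2), e = 1 ∨ e = Equiv.swap 0 1 := by decide
  intro e
  rcases hperm e with rfl | rfl
  · simp
  · rw [map_add, rename_rename, show ⇑(Equiv.swap (0 : Fin 2) 1) ∘ ⇑(Equiv.swap 0 1) = id from
      by ext; simp, rename_id, AlgHom.id_apply, add_comm]

theorem Nat.dvd_choose_two_of_dvd {n a : ℕ} (hn : Odd n) (ha : n ∣ a) : n ∣ a.choose 2 := by
  have h : n ∣ a.choose 2 * 2 := by
    rw [Nat.choose_succ_right_eq, Nat.choose_one_right]
    exact ha.mul_right _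
  exact (Nat.coprime_two_right.2 hn).dvd_of_dvd_mul_right h

theorem Int.dvd_and_dvd_of_dvd_mul_add_mul {n i j a b : ℤ} (hn : Odd n)
    (hij : IsCoprime n (i ^ 2 - j ^ 2)) (h₁ : n ∣ a * i + b * j) (h₂ : n ∣ a * j + b * i) :
    n ∣ a ∧ n ∣ b := by
  rw [show i ^ 2 - j ^ 2 = (i + j) * (i - j) by ring, IsCoprime.mul_right_iff] at hij
  have hsum : n ∣ a + b :=
    hij.1.dvd_of_dvd_mul_right (by convert dvd_add h₁ h₂ using 1; ring)
  have hdiff : n ∣ a - b :=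
    hij.2.dvd_of_dvd_mul_right (by convert dvd_sub h₁ h₂ using 1; ring)
  have h2 : IsCoprime n 2 := Int.isCoprime_two_right.2 hn
  exact ⟨h2.dvd_of_dvd_mul_left (by convert dvd_add hsum hdiff using 1; ring),
    h2.dvd_of_dvd_mul_left (by convert dvd_sub hsum hdiff using 1; ring)⟩

theorem IsPrimitiveRoot.pow_mul_add_mul_eq_one_iff {M : Type*} [CommMonoid M] {q : M} {n : ℕ}
    (hq : IsPrimitiveRoot q n) (hn : Odd n) {i j : ℕ}
    (hij : Int.gcd ((i : ℤ) ^ 2 - (j : ℤ) ^ 2) n = 1) (a b : ℕ) :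
    q ^ (a * i + b * j) = 1 ∧ q ^ (a * j + b * i) = 1 ↔ n ∣ a ∧ n ∣ b := by
  simp only [hq.pow_eq_one_iff_dvd]
  constructor
  · rintro ⟨h₁, h₂⟩
    have hcop : IsCoprime (n : ℤ) ((i : ℤ) ^ 2 - (j : ℤ) ^ 2) := by
      rw [Int.isCoprime_iff_gcd_eq_one, Int.gcd_comm, hij]
    exact_mod_cast Int.dvd_and_dvd_of_dvd_mul_add_mul (a := a) (b := b) (by exact_mod_cast hn)
      hcop (by exact_mod_cast h₁) (by exact_mod_cast h₂)
  · rintro ⟨ha, hb⟩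
    exact ⟨dvd_add (ha.mul_right i) (hb.mul_right j), dvd_add (ha.mul_right j) (hb.mul_right i)⟩

theorem Complex.exp_add_one_mul_pi_mul_I_div_pow_of_odd {n : ℕ} (hn : Odd n) :
    Complex.exp ((n + 1) * Real.pi * Complex.I / n) ^ n = 1 := by
  obtain ⟨k, rfl⟩ := hn
  rw [← Complex.exp_nat_mul]
  convert Complex.exp_nat_mul_two_pi_mul_I (k + 1) using 2
  have : (2 * k + 1 : ℂ) ≠ 0 := by exact_mod_cast (2 * k).succ_ne_zero
  push_cast
  field_simp
  ring

namespace Stmt11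

variable {P : ℂ}

theorem v_mul_u : v P * u P = P • (u P * v P) := by
  simpa [u, v] using RingQuot.mkAlgHom_rel ℂ (Rel.main (P := P))

theorem v_pow_mul_u (b : ℕ) : v P ^ b * u P = P ^ b • (u P * v P ^ b) := by
  induction b with
  | zero => simp
  | succ b ih =>
    rw [pow_succ, mul_assoc, v_mul_u, mul_smul_comm, ← mul_assoc, ih, smul_mul_assoc, smul_smul,
      ← pow_succ', mul_assoc, ← pow_succ]

theorem v_pow_mul_u_pow (b c : ℕ) : v P ^ b * u P ^ c = P ^ (b * c) • (u P ^ c * v P ^ b) := by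
  induction c with
  | zero => simp
  | succ c ih =>
    rw [pow_succ, ← mul_assoc, ih, smul_mul_assoc, mul_assoc, v_pow_mul_u, mul_smul_comm,
      smul_smul, ← pow_add, ← mul_assoc, ← pow_succ, Nat.mul_succ]

theorem monomial_mul_monomial (a b c d : ℕ) :
    (u P ^ a * v P ^ b) * (u P ^ c * v P ^ d) = P ^ (b * c) • (u P ^ (a + c) * v P ^ (b + d)) := by
  rw [mul_assoc, ← mul_assoc (v P ^ b), v_pow_mul_u_pow, smul_mul_assoc, mul_smul_comm]
  simp only [pow_add, mul_assoc]

theorem adjoin_u_v : Algebra.adjoin ℂ {u P, v P} = ⊤ := by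
  have hrange : Set.range (FreeAlgebra.ι ℂ : Fin 2 → FreeAlgebra ℂ (Fin 2)) = {ι ℂ 0, ι ℂ 1} := by
    ext; simp [Fin.exists_fin_two, eq_comm]
  rw [u, v, ← Set.image_pair, ← hrange, ← AlgHom.map_adjoin, FreeAlgebra.adjoin_range_ι,
    Algebra.map_top, AlgHom.range_eq_top]
  exact RingQuot.mkAlgHom_surjective ℂ (Rel P)

theorem span_monomials :
    Submodule.span ℂ (Set.range fun x : ℕ × ℕ => u P ^ x.1 * v P ^ x.2) = ⊤ := by
  set S := Submodule.span ℂ (Set.range fun x : ℕ × ℕ => u P ^ x.1 * v P ^ x.2)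
  have hmem (a b : ℕ) : u P ^ a * v P ^ b ∈ S := Submodule.subset_span ⟨(a, b), rfl⟩
  have hmul : S * S ≤ S := by
    rw [Submodule.span_mul_span, Submodule.span_le]
    rintro _ ⟨_, ⟨x, rfl⟩, _, ⟨y, rfl⟩, rfl⟩
    change (u P ^ x.1 * v P ^ x.2) * (u P ^ y.1 * v P ^ y.2) ∈ S
    rw [monomial_mul_monomial]
    exact S.smul_mem _ (hmem _ _)
  let S' : Subalgebra ℂ (A P) :=
    S.toSubalgebra (by simpa using hmem 0 0) fun _ _ hx hy => hmul (Submodule.mul_mem_mul hx hy)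
  have htop : ⊤ ≤ S' := by
    rw [← adjoin_u_v, Algebra.adjoin_le_iff, Set.pair_subset_iff]
    exact ⟨show u P ∈ S by simpa using hmem 1 0, show v P ∈ S by simpa using hmem 0 1⟩
  exact top_unique fun f _ => htop Algebra.mem_top

def shiftU : Module.End ℂ ((ℕ × ℕ) →₀ ℂ) := Finsupp.lmapDomain ℂ ℂ fun x => (x.1 + 1, x.2)

-- The factor `P ^ a` is what makes `shiftV P * shiftU = P • (shiftU * shiftV P)`.
variable (P) in
def shiftV : Module.End ℂ ((ℕ × ℕ) →₀ ℂ) :=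
  Finsupp.lsum ℂ fun x => LinearMap.toSpanSingleton ℂ _ (Finsupp.single (x.1, x.2 + 1) (P ^ x.1))

@[simp] theorem shiftU_single (x : ℕ × ℕ) (c : ℂ) :
    shiftU (Finsupp.single x c) = Finsupp.single (x.1 + 1, x.2) c := by
  simp [shiftU]

@[simp] theorem shiftV_single (x : ℕ × ℕ) (c : ℂ) :
    shiftV P (Finsupp.single x c) = Finsupp.single (x.1, x.2 + 1) (P ^ x.1 * c) := by
  simp [shiftV, Finsupp.smul_single, mul_comm]

variable (P) in
def shiftRep : A P →ₐ[ℂ] Module.End ℂ ((ℕ × ℕ) →₀ ℂ) :=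
  RingQuot.liftAlgHom ℂ ⟨FreeAlgebra.lift ℂ ![shiftU, shiftV P], by
    rintro _ _ ⟨⟩
    ext x c
    simp [Module.End.mul_apply, pow_succ, mul_comm]⟩

theorem shiftRep_monomial (a b : ℕ) :
    shiftRep P (u P ^ a * v P ^ b) (Finsupp.single (0, 0) 1) = Finsupp.single (a, b) 1 := by
  have hv (b : ℕ) : (shiftV P ^ b) (Finsupp.single (0, 0) 1) = Finsupp.single (0, b) 1 := by
    induction b with
    | zero => rfl
    | succ b ih => rw [pow_succ', Module.End.mul_apply, ih, shiftV_single]; simp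
  have hu (a : ℕ) : (shiftU ^ a) (Finsupp.single (0, b) 1) = Finsupp.single (a, b) (1 : ℂ) := by
    induction a with
    | zero => rfl
    | succ a ih => rw [pow_succ', Module.End.mul_apply, ih, shiftU_single]
  simp [shiftRep, u, v, hu, hv]

theorem linearIndependent_monomials :
    LinearIndependent ℂ fun x : ℕ × ℕ => u P ^ x.1 * v P ^ x.2 := by
  refine LinearIndependent.of_comp
    ((LinearMap.applyₗ (Finsupp.single (0, 0) 1)).comp (shiftRep P).toLinearMap) ?_
  convert Finsupp.linearIndependent_single_one ℂ (ℕ × ℕ) with x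
  exact shiftRep_monomial x.1 x.2

variable (P) in
def monomialBasis : Module.Basis (ℕ × ℕ) ℂ (A P) :=
  .mk linearIndependent_monomials span_monomials.ge

theorem monomialBasis_apply (x : ℕ × ℕ) : monomialBasis P x = u P ^ x.1 * v P ^ x.2 :=
  Module.Basis.mk_apply _ _ _

section evalPow

variable (n : ℕ) (hP : P ^ (n * n) = 1)
include hP

theorem u_pow_mul_v_pow_comm : u P ^ n * v P ^ n = v P ^ n * u P ^ n := by
  rw [v_pow_mul_u_pow, hP, one_smul]

open scoped IsMulCommutative in
/-- Evaluation at `(u ^ n, v ^ n)`. -/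
def evalPow : MvPolynomial (Fin 2) ℂ →ₐ[ℂ] A P :=
  have := Algebra.isMulCommutative_adjoin ℂ (s := {u P ^ n, v P ^ n}) (by
    simp only [Set.mem_insert_iff, Set.mem_singleton_iff]
    rintro _ (rfl | rfl) _ (rfl | rfl)
    exacts [rfl, u_pow_mul_v_pow_comm n hP, (u_pow_mul_v_pow_comm n hP).symm, rfl])
  (Algebra.adjoin ℂ {u P ^ n, v P ^ n}).val.comp <| MvPolynomial.aeval
    (![⟨u P ^ n, Algebra.subset_adjoin (by simp)⟩, ⟨v P ^ n, Algebra.subset_adjoin (by simp)⟩] :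
      Fin 2 → Algebra.adjoin ℂ {u P ^ n, v P ^ n})

@[simp] theorem evalPow_X_zero : evalPow n hP (.X 0) = u P ^ n := by simp [evalPow]
@[simp] theorem evalPow_X_one : evalPow n hP (.X 1) = v P ^ n := by simp [evalPow]

theorem evalPow_monomial (m : Fin 2 →₀ ℕ) (c : ℂ) :
    evalPow n hP (.monomial m c) = c • (u P ^ (n * m 0) * v P ^ (n * m 1)) := by
  simp [MvPolynomial.monomial_eq, Finsupp.prod_fintype, Fin.prod_univ_two, pow_mul,
    Algebra.smul_def]

theorem u_pow_mul_v_pow_mem_range (a b : ℕ) :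
    u P ^ (n * a) * v P ^ (n * b) ∈ (evalPow n hP).range :=
  ⟨.X 0 ^ a * .X 1 ^ b, by simp [pow_mul]⟩

theorem mem_range_evalPow_of_dvd {f : A P}
    (hf : ∀ x ∈ ((monomialBasis P).repr f).support, n ∣ x.1 ∧ n ∣ x.2) :
    f ∈ (evalPow n hP).range := by
  rw [← (monomialBasis P).linearCombination_repr f, Finsupp.linearCombination_apply]
  refine Subalgebra.sum_mem _ fun x hx => Subalgebra.smul_mem _ ?_ _
  obtain ⟨⟨a, ha⟩, ⟨b, hb⟩⟩ := hf x hx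
  rw [monomialBasis_apply, ha, hb]
  exact u_pow_mul_v_pow_mem_range n hP a b

theorem apply_evalPow_of_fixes {T : A P →ₗ[ℂ] A P}
    (hT : ∀ a b, T (u P ^ (n * a) * v P ^ (n * b)) = u P ^ (n * a) * v P ^ (n * b))
    (g : MvPolynomial (Fin 2) ℂ) : T (evalPow n hP g) = evalPow n hP g := by
  induction g using MvPolynomial.induction_on' with
  | monomial m c => rw [evalPow_monomial, map_smul, hT]
  | add g g' hg hg' => rw [map_add, map_add, hg, hg']

theorem apply_evalPow_of_swaps {T : A P →ₗ[ℂ] A P}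
    (hT : ∀ a b, T (u P ^ (n * a) * v P ^ (n * b)) = u P ^ (n * b) * v P ^ (n * a))
    (g : MvPolynomial (Fin 2) ℂ) :
    T (evalPow n hP g) = evalPow n hP (MvPolynomial.rename (Equiv.swap 0 1) g) := by
  induction g using MvPolynomial.induction_on' with
  | monomial m c =>
    rw [evalPow_monomial, map_smul, hT, MvPolynomial.rename_monomial, evalPow_monomial]
    simp
  | add g g' hg hg' => simp only [map_add, hg, hg']

theorem map_symmetricSubalgebra_evalPow :
    (MvPolynomial.symmetricSubalgebra (Fin 2) ℂ).map (evalPow n hP) =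
      Algebra.adjoin ℂ {u P ^ n + v P ^ n, u P ^ n * v P ^ n} := by
  rw [MvPolynomial.symmetricSubalgebra_eq_adjoin_esymm, AlgHom.map_adjoin, ← Set.range_comp]
  have hesymm1 : MvPolynomial.esymm (Fin 2) ℂ 1 = .X 0 + .X 1 := by
    simp [MvPolynomial.esymm_one, Fin.sum_univ_two]
  have hesymm2 : MvPolynomial.esymm (Fin 2) ℂ 2 = .X 0 * .X 1 := by
    have : Finset.powersetCard 2 (Finset.univ : Finset (Fin 2)) = {Finset.univ} := by decide
    simp [MvPolynomial.esymm, this, Fin.prod_univ_two]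
  congr 1
  ext f
  simp [Fin.exists_fin_two, hesymm1, hesymm2, eq_comm]

end evalPow

theorem apply_u_pow_mul_v_pow (φ : A P →ₐ[ℂ] A P) {c d : ℂ} (hu : φ (u P) = c • u P)
    (hv : φ (v P) = d • v P) (a b : ℕ) :
    φ (u P ^ a * v P ^ b) = (c ^ a * d ^ b) • (u P ^ a * v P ^ b) := by
  rw [map_mul, map_pow, map_pow, hu, hv, smul_pow, smul_pow, smul_mul_smul_comm]

theorem zeta_scalar_eq_one {G : Type*} [DivisionMonoid G] {q p : G} {n : ℕ} (hn : Odd n)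
    (hq : q ^ n = 1) (hp : p ^ n = 1) (i j a b : ℕ) :
    q ^ ((n * a + (n * a).choose 2 + (n * b).choose 2) * i * j + n * a * (n * b) * j ^ 2) *
      p ^ (((n * a * (n * b) : ℕ) : ℤ) * ((i : ℤ) ^ 2 - (j : ℤ) ^ 2)) = 1 := by
  have hna : n ∣ n * a := dvd_mul_right n a
  have hnb : n ∣ n * b := dvd_mul_right n b
  obtain ⟨k, hk⟩ : n ∣ (n * a + (n * a).choose 2 + (n * b).choose 2) * i * j +
      n * a * (n * b) * j ^ 2 :=
    ((((hna.add (Nat.dvd_choose_two_of_dvd hn hna)).add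
      (Nat.dvd_choose_two_of_dvd hn hnb)).mul_right i).mul_right j).add
      ((hna.mul_right _).mul_right _)
  obtain ⟨l, hl⟩ : n ∣ n * a * (n * b) := hna.mul_right _
  rw [hk, hl, pow_mul, hq, one_pow, one_mul, Nat.cast_mul, mul_assoc, zpow_mul, zpow_natCast, hp,
    one_zpow]

theorem setOf_fixed_eq_map_symmetricSubalgebra {n : ℕ} (hP : P ^ (n * n) = 1)
    {φx φy ζ : A P →ₗ[ℂ] A P} {χx χy : ℕ → ℕ → ℂ}
    (hφx : ∀ a b, φx (u P ^ a * v P ^ b) = χx a b • (u P ^ a * v P ^ b))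
    (hφy : ∀ a b, φy (u P ^ a * v P ^ b) = χy a b • (u P ^ a * v P ^ b))
    (hχ : ∀ a b, χx a b = 1 ∧ χy a b = 1 ↔ n ∣ a ∧ n ∣ b)
    (hζ : ∀ a b, ζ (u P ^ (n * a) * v P ^ (n * b)) = u P ^ (n * b) * v P ^ (n * a)) :
    {f | φx f = f ∧ φy f = f ∧ ζ f = f} =
      (MvPolynomial.symmetricSubalgebra (Fin 2) ℂ).map (evalPow n hP) := by
  have hfix {T : A P →ₗ[ℂ] A P} {χ : ℕ → ℕ → ℂ}
      (hT : ∀ a b, T (u P ^ a * v P ^ b) = χ a b • (u P ^ a * v P ^ b)) (f : A P) :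
      T f = f ↔ ∀ x ∈ ((monomialBasis P).repr f).support, χ x.1 x.2 = 1 :=
    (monomialBasis P).apply_eq_self_iff_of_apply_eq_smul
      (fun x => by simp [monomialBasis_apply, hT]) f
  ext f
  rw [SetLike.mem_coe, Subalgebra.mem_map]
  constructor
  · rintro ⟨hfx, hfy, hfζ⟩
    obtain ⟨g, rfl⟩ := (AlgHom.mem_range _).1 <| mem_range_evalPow_of_dvd n hP fun x hx =>
      (hχ x.1 x.2).1 ⟨(hfix hφx f).1 hfx x hx, (hfix hφy f).1 hfy x hx⟩
    refine ⟨(2 : ℂ)⁻¹ • (g + MvPolynomial.rename (Equiv.swap 0 1) g),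
      Subalgebra.smul_mem _ (MvPolynomial.isSymmetric_add_rename_swap g) _, ?_⟩
    rw [map_smul, map_add, ← apply_evalPow_of_swaps n hP hζ, hfζ, ← two_smul ℂ, smul_smul,
      inv_mul_cancel₀ two_ne_zero, one_smul]
  · rintro ⟨g, hg, rfl⟩
    have hfixes {T : A P →ₗ[ℂ] A P} {χ : ℕ → ℕ → ℂ}
        (hT : ∀ a b, T (u P ^ a * v P ^ b) = χ a b • (u P ^ a * v P ^ b))
        (hχ1 : ∀ a b, n ∣ a → n ∣ b → χ a b = 1) : T (evalPow n hP g) = evalPow n hP g :=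
      apply_evalPow_of_fixes n hP (fun a b => by
        rw [hT, hχ1 _ _ (dvd_mul_right n a) (dvd_mul_right n b), one_smul]) g
    exact ⟨hfixes hφx fun a b ha hb => ((hχ a b).2 ⟨ha, hb⟩).1,
      hfixes hφy fun a b ha hb => ((hχ a b).2 ⟨ha, hb⟩).2,
      by rw [apply_evalPow_of_swaps n hP hζ, hg]⟩

end Stmt11

open Stmt11 in
theorem stmt_11_general (n : ℕ) (hodd : Odd n) (q p : ℂ)
    (hq : q = Complex.exp (2 * Real.pi * Complex.I / n))
    (hp : p = Complex.exp ((n + 1) * Real.pi * Complex.I / n))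
    (i j : ℕ)
    (hcop : Int.gcd ((i : ℤ) ^ 2 - (j : ℤ) ^ 2) (n : ℤ) = 1)
    (P : ℂ) (hP : P = p ^ ((i : ℤ) ^ 2 - (j : ℤ) ^ 2))
    (φx φy : A P →ₐ[ℂ] A P)
    (hφxu : φx (u P) = q ^ i • u P) (hφxv : φx (v P) = q ^ j • v P)
    (hφyu : φy (u P) = q ^ j • u P) (hφyv : φy (v P) = q ^ i • v P)
    (ζ : A P →ₗ[ℂ] A P)
    (hζ : ∀ a b : ℕ,
      ζ (u P ^ a * v P ^ b) =
        (q ^ ((a + a.choose 2 + b.choose 2) * i * j + a * b * j ^ 2) *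
          p ^ (((a * b : ℕ) : ℤ) * ((i : ℤ) ^ 2 - (j : ℤ) ^ 2))) •
          (u P ^ b * v P ^ a)) :
    {f : A P | φx f = f ∧ φy f = f ∧ ζ f = f} =
      (Algebra.adjoin ℂ ({u P ^ n + v P ^ n, u P ^ n * v P ^ n} : Set (A P)) :
        Set (A P)) := by
  have hq' : IsPrimitiveRoot q n := hq ▸ Complex.isPrimitiveRoot_exp n hodd.pos.ne'
  have hpn : p ^ n = 1 := hp ▸ Complex.exp_add_one_mul_pi_mul_I_div_pow_of_odd hodd
  have hPn : P ^ (n * n) = 1 := by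
    have : P ^ n = 1 := by
      rw [hP, ← zpow_natCast, ← zpow_mul, mul_comm, zpow_mul, zpow_natCast, hpn, one_zpow]
    rw [pow_mul, this, one_pow]
  rw [← map_symmetricSubalgebra_evalPow n hPn]
  refine setOf_fixed_eq_map_symmetricSubalgebra hPn (φx := φx.toLinearMap) (φy := φy.toLinearMap)
    (apply_u_pow_mul_v_pow φx hφxu hφxv) (apply_u_pow_mul_v_pow φy hφyu hφyv) (fun a b => ?_)
    (fun a b => ?_)
  · simp only [← pow_mul, ← pow_add, mul_comm _ a, mul_comm _ b]
    exact hq'.pow_mul_add_mul_eq_one_iff hodd hcop a b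
  · rw [hζ, zeta_scalar_eq_one hodd hq'.pow_eq_one hpn, one_smul]

open Stmt11 in
theorem stmt_11 (n : ℕ) (hn : 3 ≤ n) (hodd : Odd n) (q p : ℂ)
    (hq : q = Complex.exp (2 * Real.pi * Complex.I / n))
    (hp : p = Complex.exp ((n + 1) * Real.pi * Complex.I / n))
    (i j : ℕ) (hi : i ≤ n - 1) (hj : j ≤ n - 1)
    (hcop : Int.gcd ((i : ℤ) ^ 2 - (j : ℤ) ^ 2) (n : ℤ) = 1)
    (P : ℂ) (hP : P = p ^ ((i : ℤ) ^ 2 - (j : ℤ) ^ 2))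
    (φx φy : A P →ₐ[ℂ] A P)
    (hφxu : φx (u P) = q ^ i • u P) (hφxv : φx (v P) = q ^ j • v P)
    (hφyu : φy (u P) = q ^ j • u P) (hφyv : φy (v P) = q ^ i • v P)
    (ζ : A P →ₗ[ℂ] A P)
    (hζ : ∀ a b : ℕ,
      ζ (u P ^ a * v P ^ b) =
        (q ^ ((a + a.choose 2 + b.choose 2) * i * j + a * b * j ^ 2) *
          p ^ (((a * b : ℕ) : ℤ) * ((i : ℤ) ^ 2 - (j : ℤ) ^ 2))) •
          (u P ^ b * v P ^ a)) :
    {f : A P | φx f = f ∧ φy f = f ∧ ζ f = f} =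
      (Algebra.adjoin ℂ ({u P ^ n + v P ^ n, u P ^ n * v P ^ n} : Set (A P)) :
        Set (A P)) :=
  stmt_11_general n hodd q p hq hp i j hcop P hP φx φy hφxu hφxv hφyu hφyv ζ hζ

end
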